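/- Let r be a positive integer all of whose prime factors p satisfy p ≡ 1 (mod 6), let k be an integer with r dividing 1 + k + k², let l be a positive integer, and set n = r·l. Then the subgroup of GL(3,ℂ) generated by E, B_{n,k} and L_n^{−r} (this is the group C_{n,l}^{(k)}) has order 3·n·l = 3·r·l². -/

import Mathlib

open Matrix

/-- The matrix `E` with entries `E₀₁ = E₁₂ = E₂₀ = 1` and all other entries `0`. -/
noncomputable def Ematrix : Matrix (Fin 3) (Fin 3) ℂ := !![0, 1, 0; 0, 0, 1; 1, 0, 0]

/-- The matrix `B_{n,k} = diag(ν, ν^k, ν^{−1−k})` with `ν = exp(2πi/n)`. -/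
noncomputable def Bmatrix (n : ℕ) (k : ℤ) : Matrix (Fin 3) (Fin 3) ℂ :=
  Matrix.diagonal ![Complex.exp (2 * (Real.pi : ℂ) * Complex.I / (n : ℂ)),
    Complex.exp (2 * (Real.pi : ℂ) * Complex.I / (n : ℂ)) ^ k,
    Complex.exp (2 * (Real.pi : ℂ) * Complex.I / (n : ℂ)) ^ (-1 - k)]

/-- The matrix `L_n = diag(1, ν, ν⁻¹)` with `ν = exp(2πi/n)`. -/
noncomputable def Lmatrix (n : ℕ) : Matrix (Fin 3) (Fin 3) ℂ :=
  Matrix.diagonal ![1, Complex.exp (2 * (Real.pi : ℂ) * Complex.I / (n : ℂ)),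
    (Complex.exp (2 * (Real.pi : ℂ) * Complex.I / (n : ℂ)))⁻¹]

/-!
Write `C = L_n^{-r}` and describe a diagonal matrix `diag(ν^{e₀}, ν^{e₁}, ν^{e₂})` by its exponent
vector `e`: then `B` and `C` have exponents `(1, k, -1-k)` and `(0, -r, r)`. Conjugation by the
permutation matrix `E` rotates exponent vectors, and `1 + k + k² = r t` is exactly what makes the
rotations of these two vectors integral combinations of them, so `E` normalises `D = ⟨B, C⟩`.
The first coordinate shows `⟨B⟩ ∩ ⟨C⟩ = 1`, so `|D| = ord B · ord C = n · l`; no nontrivial power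
of `E` is diagonal, so the group is `⟨E⟩ ⋉ D` of order `3 · n · l`.
-/

theorem orderOf_eq_of_zpow_eq_one_iff {G : Type*} [Group G] {x : G} {n : ℕ}
    (h : ∀ m : ℤ, x ^ m = 1 ↔ (n : ℤ) ∣ m) : orderOf x = n := by
  have hdvd (m : ℤ) : (orderOf x : ℤ) ∣ m ↔ (n : ℤ) ∣ m := orderOf_dvd_iff_zpow_eq_one.trans (h m)
  exact Int.natCast_dvd_natCast.1 ((hdvd n).2 dvd_rfl) |>.antisymm
    (Int.natCast_dvd_natCast.1 ((hdvd _).1 dvd_rfl))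

namespace Subgroup

variable {G : Type*} [Group G]

theorem closure_insert_eq_zpowers_sup (g : G) (s : Set G) :
    closure (insert g s) = zpowers g ⊔ closure s := by
  rw [Set.insert_eq, closure_union, zpowers_eq_closure]

theorem card_sup_of_le_normalizer_of_disjoint {H N : Subgroup G} (hLE : H ≤ normalizer N)
    (hdisj : Disjoint H N) : Nat.card (H ⊔ N : Subgroup G) = Nat.card H * Nat.card N := by
  have hrange : (↑(H ⊔ N) : Set G) = Set.range fun g : H × N ↦ (g.1 : G) * g.2 := by
    ext
    simp [coe_mul_of_left_le_normalizer_right H N hLE, Set.mem_mul]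
  rw [← Nat.card_prod, ← Nat.card_range_of_injective (mul_injective_of_disjoint hdisj), ← hrange]
  rfl

theorem mem_normalizer_closure_of_conj_mem {s : Set G} {g : G}
    (h₁ : ∀ x ∈ s, g * x * g⁻¹ ∈ closure s) (h₂ : ∀ x ∈ s, g⁻¹ * x * g ∈ closure s) :
    g ∈ normalizer (closure s) := by
  rw [mem_normalizer_iff_map_conj_eq, MonoidHom.map_closure]
  refine le_antisymm (closure_le _ |>.2 ?_) (closure_le _ |>.2 fun x hx ↦ ?_)
  · rintro _ ⟨x, hx, rfl⟩
    exact h₁ x hx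
  · rw [← MonoidHom.map_closure]
    exact ⟨g⁻¹ * x * g, h₂ x hx, by simp [mul_assoc]⟩

theorem _root_.Commute.zpowers_le_normalizer_zpowers {a b : G} (h : Commute a b) :
    zpowers a ≤ normalizer (zpowers b) := by
  rw [zpowers_eq_closure b, le_normalizer_closure_iff]
  rintro x hx y rfl
  obtain ⟨m, rfl⟩ := mem_zpowers_iff.1 hx
  rw [(h.zpow_left m).eq, mul_inv_cancel_right]
  exact subset_closure rfl

end Subgroup

namespace Matrix

open Subgroup

variable {ι R : Type*} [Fintype ι] [DecidableEq ι] [CommRing R]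

noncomputable def diagonalUnits : (ι → Rˣ) →* GL ι R :=
  (Units.map (diagonalRingHom ι R).toMonoidHom).comp
    (MulEquiv.piUnits (M := fun _ ↦ R)).symm.toMonoidHom

@[simp]
theorem coe_diagonalUnits (v : ι → Rˣ) :
    (diagonalUnits v : Matrix ι ι R) = diagonal fun i ↦ (v i : R) :=
  rfl

theorem diagonalUnits_injective : Function.Injective (diagonalUnits : (ι → Rˣ) →* GL ι R) := by
  intro v w h
  ext i
  simpa using congr_fun (diagonal_injective (Units.ext_iff.1 h)) i

noncomputable def diagonalZpow (x : Rˣ) (e : ι → ℤ) : GL ι R :=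
  diagonalUnits fun i ↦ x ^ e i

@[simp]
theorem coe_diagonalZpow (x : Rˣ) (e : ι → ℤ) :
    (diagonalZpow x e : Matrix ι ι R) = diagonal fun i ↦ ((x ^ e i : Rˣ) : R) :=
  rfl

section

variable (x : Rˣ)

theorem diagonalZpow_mem_range (e : ι → ℤ) :
    diagonalZpow x e ∈ (diagonalUnits : (ι → Rˣ) →* GL ι R).range :=
  ⟨_, rfl⟩

theorem diagonalZpow_add (e f : ι → ℤ) :
    diagonalZpow x (e + f) = diagonalZpow x e * diagonalZpow x f := by
  rw [diagonalZpow, diagonalZpow, diagonalZpow, ← map_mul]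
  congr 1
  ext1 i
  exact _root_.zpow_add x (e i) (f i)

theorem diagonalZpow_zsmul (m : ℤ) (e : ι → ℤ) :
    diagonalZpow x (m • e) = diagonalZpow x e ^ m := by
  rw [diagonalZpow, diagonalZpow, ← map_zpow]
  congr 1
  ext1 i
  rw [Pi.smul_apply, smul_eq_mul, mul_comm, _root_.zpow_mul, Pi.pow_apply]

theorem diagonalZpow_zpow (m : ℤ) (e : ι → ℤ) :
    diagonalZpow (x ^ m) e = diagonalZpow x e ^ m := by
  rw [← diagonalZpow_zsmul, diagonalZpow, diagonalZpow]
  simp only [Pi.smul_apply, smul_eq_mul, ← _root_.zpow_mul, mul_comm m]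

theorem commute_diagonalZpow (e f : ι → ℤ) : Commute (diagonalZpow x e) (diagonalZpow x f) := by
  rw [Commute, SemiconjBy, ← diagonalZpow_add, ← diagonalZpow_add, add_comm]

theorem diagonalZpow_zsmul_add_zsmul_mem_closure (e f : ι → ℤ) (a b : ℤ) :
    diagonalZpow x (a • e + b • f) ∈ closure {diagonalZpow x e, diagonalZpow x f} := by
  rw [diagonalZpow_add, diagonalZpow_zsmul, diagonalZpow_zsmul]
  exact mul_mem (zpow_mem (subset_closure (by simp)) a) (zpow_mem (subset_closure (by simp)) b)

end

variable {x : Rˣ} {n : ℕ}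

theorem diagonalZpow_eq_one_iff (hx : IsPrimitiveRoot x n) (e : ι → ℤ) :
    diagonalZpow x e = 1 ↔ ∀ i, (n : ℤ) ∣ e i := by
  simp only [diagonalZpow, map_eq_one_iff _ diagonalUnits_injective, funext_iff, Pi.one_apply,
    hx.zpow_eq_one_iff_dvd]

theorem orderOf_diagonalZpow (hx : IsPrimitiveRoot x n) {e : ι → ℤ} {i₀ : ι} (he : e i₀ = 1) :
    orderOf (diagonalZpow x e) = n := by
  refine orderOf_eq_of_zpow_eq_one_iff fun m ↦ ?_
  rw [← diagonalZpow_zsmul, diagonalZpow_eq_one_iff hx]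
  exact ⟨fun h ↦ by simpa [he] using h i₀, fun h i ↦ h.mul_right (e i)⟩

theorem disjoint_zpowers_diagonalZpow (hx : IsPrimitiveRoot x n) {e f : ι → ℤ} {i₀ : ι}
    (he : e i₀ = 1) (hf : f i₀ = 0) :
    Disjoint (zpowers (diagonalZpow x e)) (zpowers (diagonalZpow x f)) := by
  rw [disjoint_def]
  rintro _ ⟨a, rfl⟩ ⟨b, hb⟩
  dsimp only at hb
  have hdiff : diagonalZpow x (a • e - b • f) = 1 := by
    rw [sub_eq_add_neg, ← neg_smul, diagonalZpow_add, diagonalZpow_zsmul, diagonalZpow_zsmul,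
      _root_.zpow_neg, hb, mul_inv_cancel]
  have ha : (n : ℤ) ∣ a := by simpa [he, hf] using (diagonalZpow_eq_one_iff hx _).1 hdiff i₀
  rwa [← orderOf_dvd_iff_zpow_eq_one, orderOf_diagonalZpow hx he]

end Matrix

section Ematrix

open Subgroup hiding closure

theorem Ematrix_pow_three : Ematrix ^ 3 = 1 := by
  ext i j
  fin_cases i <;> fin_cases j <;> simp [Ematrix, pow_succ, mul_apply, Fin.sum_univ_three]

noncomputable def Eunit : GL (Fin 3) ℂ :=
  ⟨Ematrix, Ematrix ^ 2, by rw [← pow_succ', Ematrix_pow_three],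
    by rw [← pow_succ, Ematrix_pow_three]⟩

@[simp]
theorem coe_Eunit : (Eunit : Matrix (Fin 3) (Fin 3) ℂ) = Ematrix :=
  rfl

theorem orderOf_Eunit : orderOf Eunit = 3 := by
  have : Fact (Nat.Prime 3) := ⟨Nat.prime_three⟩
  refine orderOf_eq_prime (Units.ext ?_) fun h ↦ ?_
  · simpa using Ematrix_pow_three
  · simpa [Ematrix] using congrArg (· 0 0) (Units.ext_iff.1 h)

theorem diagonal_mul_Ematrix (v : Fin 3 → ℂ) :
    diagonal v * Ematrix = Ematrix * diagonal (v ∘ (finRotate 3).symm) := by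
  ext i j
  fin_cases i <;> fin_cases j <;> simp [Ematrix, mul_apply, Fin.sum_univ_three]; rfl

theorem diagonalUnits_mul_Eunit (v : Fin 3 → ℂˣ) :
    diagonalUnits v * Eunit = Eunit * diagonalUnits (v ∘ (finRotate 3).symm) := by
  ext1
  simp only [Units.val_mul, coe_Eunit, coe_diagonalUnits]
  exact diagonal_mul_Ematrix _

theorem Eunit_mul_diagonalZpow_mul_inv (x : ℂˣ) (e : Fin 3 → ℤ) :
    Eunit * diagonalZpow x e * Eunit⁻¹ = diagonalZpow x (e ∘ finRotate 3) := by
  rw [mul_inv_eq_iff_eq_mul, diagonalZpow, diagonalZpow, diagonalUnits_mul_Eunit]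
  congr 2
  ext1 i
  simp

theorem inv_Eunit_mul_diagonalZpow_mul (x : ℂˣ) (e : Fin 3 → ℤ) :
    Eunit⁻¹ * diagonalZpow x e * Eunit = diagonalZpow x (e ∘ (finRotate 3).symm) := by
  rw [mul_assoc, inv_mul_eq_iff_eq_mul, diagonalZpow, diagonalZpow, diagonalUnits_mul_Eunit]
  rfl

theorem disjoint_zpowers_Eunit_range_diagonalUnits :
    Disjoint (zpowers Eunit) (diagonalUnits : (Fin 3 → ℂˣ) →* GL (Fin 3) ℂ).range := by
  classical
  rw [disjoint_def]
  rintro g hg ⟨v, rfl⟩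
  have hfin : IsOfFinOrder Eunit := orderOf_pos_iff.1 (by rw [orderOf_Eunit]; norm_num)
  rw [hfin.mem_zpowers_iff_mem_range_orderOf, orderOf_Eunit] at hg
  simp only [Finset.mem_image, Finset.mem_range] at hg
  obtain ⟨j, hj, hv⟩ := hg
  interval_cases j
  · simpa using hv.symm
  · simpa [Ematrix] using congrArg (· 0 1) (Units.ext_iff.1 hv)
  · simpa [Ematrix, sq, mul_apply, Fin.sum_univ_three] using
      congrArg (· 0 2) (Units.ext_iff.1 hv)

variable {ν : ℂˣ} {r l : ℕ} {k t : ℤ}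

theorem Eunit_mem_normalizer_closure (ht : 1 + k + k ^ 2 = r * t) :
    Eunit ∈ normalizer
      (Subgroup.closure {diagonalZpow ν ![1, k, -1 - k], diagonalZpow ν ![0, -(r : ℤ), r]} :
        Set (GL (Fin 3) ℂ)) := by
  apply mem_normalizer_closure_of_conj_mem
  · rintro _ (rfl | rfl)
    · rw [Eunit_mul_diagonalZpow_mul_inv]
      convert diagonalZpow_zsmul_add_zsmul_mem_closure ν _ _ k t using 2
      ext i; fin_cases i <;> simp <;> linarith
    · rw [Eunit_mul_diagonalZpow_mul_inv]
      convert diagonalZpow_zsmul_add_zsmul_mem_closure ν _ _ (-r) (-1 - k) using 2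
      ext i; fin_cases i <;> simp <;> ring
  · rintro _ (rfl | rfl)
    · rw [inv_Eunit_mul_diagonalZpow_mul]
      convert diagonalZpow_zsmul_add_zsmul_mem_closure ν _ _ (-1 - k) (-t) using 2
      ext i; fin_cases i <;> simp <;> linarith
    · rw [inv_Eunit_mul_diagonalZpow_mul]
      convert diagonalZpow_zsmul_add_zsmul_mem_closure ν _ _ r k using 2
      ext i; fin_cases i <;> simp <;> ring

theorem card_closure_Eunit_diagonalZpow (hr : r ≠ 0) (hν : IsPrimitiveRoot ν (r * l))
    (ht : 1 + k + k ^ 2 = r * t) :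
    Nat.card (Subgroup.closure
        {Eunit, diagonalZpow ν ![1, k, -1 - k], diagonalZpow ν ![0, -(r : ℤ), r]})
      = 3 * (r * l) * l := by
  have hB : orderOf (diagonalZpow ν ![1, k, -1 - k]) = r * l :=
    orderOf_diagonalZpow hν (i₀ := 0) rfl
  have hC : orderOf (diagonalZpow ν ![0, -(r : ℤ), r]) = l := by
    have hνr : IsPrimitiveRoot (ν ^ (r : ℤ)) l := by
      simpa [Nat.mul_div_cancel_left l (Nat.pos_of_ne_zero hr)] using
        hν.pow_of_dvd hr (dvd_mul_right r l)
    rw [show ![0, -(r : ℤ), r] = (r : ℤ) • ![0, -1, 1] by ext i; fin_cases i <;> simp,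
      diagonalZpow_zsmul, ← diagonalZpow_zpow]
    exact orderOf_diagonalZpow hνr (i₀ := 2) rfl
  set B := diagonalZpow ν ![1, k, -1 - k]
  set C := diagonalZpow ν ![0, -(r : ℤ), r]
  have hBC : Nat.card (Subgroup.closure {B, C}) = r * l * l := by
    rw [closure_insert_eq_zpowers_sup, ← zpowers_eq_closure,
      card_sup_of_le_normalizer_of_disjoint
        (commute_diagonalZpow ν _ _).zpowers_le_normalizer_zpowers
        (disjoint_zpowers_diagonalZpow hν (i₀ := 0) rfl rfl),
      Nat.card_zpowers, Nat.card_zpowers, hB, hC]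
  have hdiag :
      Subgroup.closure {B, C} ≤ (diagonalUnits : (Fin 3 → ℂˣ) →* GL (Fin 3) ℂ).range := by
    rw [Subgroup.closure_le]
    rintro _ (rfl | rfl) <;> exact diagonalZpow_mem_range ν _
  rw [closure_insert_eq_zpowers_sup,
    card_sup_of_le_normalizer_of_disjoint (zpowers_le.2 (Eunit_mem_normalizer_closure ht))
      (disjoint_zpowers_Eunit_range_diagonalUnits.mono_right hdiag),
    Nat.card_zpowers, orderOf_Eunit, hBC, mul_assoc 3]

end Ematrix

theorem C_nlk_order_general (r : ℕ) (hr : 0 < r)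
    (k : ℤ) (hk : (r : ℤ) ∣ 1 + k + k ^ 2)
    (l : ℕ) (hl : 0 < l) (n : ℕ) (hn : n = r * l)
    (E B L : GL (Fin 3) ℂ)
    (hE : E.val = Ematrix) (hB : B.val = Bmatrix n k) (hL : L.val = Lmatrix n) :
    Nat.card ↥(Subgroup.closure ({E, B, L ^ (-(r : ℤ))} : Set (GL (Fin 3) ℂ)))
      = 3 * n * l := by
  obtain ⟨t, ht⟩ := hk
  have hn0 : n ≠ 0 := by rw [hn]; positivity
  have hprim := Complex.isPrimitiveRoot_exp n hn0
  set ν : ℂˣ := (hprim.isUnit hn0).unit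
  have hν : IsPrimitiveRoot ν (r * l) := by rw [← hn]; exact hprim.isUnit_unit hn0
  have hE' : E = Eunit := Units.ext hE
  have hBdiag : B = diagonalZpow ν ![1, k, -1 - k] := by
    ext1
    rw [hB, Bmatrix, coe_diagonalZpow]
    congr 1
    ext i; fin_cases i <;> simp [ν, Units.val_zpow_eq_zpow_val]
  have hCdiag : L ^ (-(r : ℤ)) = diagonalZpow ν ![0, -(r : ℤ), r] := by
    have hLdiag : L = diagonalZpow ν ![0, 1, -1] := by
      ext1
      rw [hL, Lmatrix, coe_diagonalZpow]
      congr 1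
      ext i; fin_cases i <;> simp [ν]
    rw [hLdiag, ← diagonalZpow_zsmul]
    congr 1
    ext i; fin_cases i <;> simp
  rw [hE', hBdiag, hCdiag, card_closure_Eunit_diagonalZpow hr.ne' hν ht, hn]

/-- The group `C_{n,l}^{(k)}`, generated by `E`, `B_{n,k}` and `L_n^{−r}` inside `GL(3,ℂ)`,
where `n = r·l`, has order `3·n·l`. -/
theorem C_nlk_order (r : ℕ) (hr : 0 < r)
    (hrprime : ∀ p : ℕ, p.Prime → p ∣ r → p % 6 = 1)
    (k : ℤ) (hk : (r : ℤ) ∣ 1 + k + k ^ 2)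
    (l : ℕ) (hl : 0 < l) (n : ℕ) (hn : n = r * l)
    (E B L : GL (Fin 3) ℂ)
    (hE : E.val = Ematrix) (hB : B.val = Bmatrix n k) (hL : L.val = Lmatrix n) :
    Nat.card ↥(Subgroup.closure ({E, B, L ^ (-(r : ℤ))} : Set (GL (Fin 3) ℂ)))
      = 3 * n * l :=
  C_nlk_order_general r hr k hk l hl n hn E B L hE hB hL
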